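/- Fix β > 1, 0 < η < θ, and let ψ : ℝ → [0,∞) be a smooth function supported in [η, θ] with ∫ψ = 1. For t > 0 let σ̃_t ∗ h denote (σ̃_t ∗ h)(x,y) = (1/t) ∫ h(x+u, y+u^β/t^{β−1}) ψ(u/t) du. Then there is a constant C (depending on β, η, θ, ψ) such that for all s, t with 0 < t ≤ s: ‖(σ̃_t ∗ φ_s) − φ_s‖_{L¹(ℝ²)} ≤ C · t/s, where φ_s is the 2-dimensional Poisson kernel at scale s. -/

import Mathlib

open MeasureTheory

/-- The 2-dimensional Poisson kernel at scale `s`. -/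
noncomputable def poissonKer (s : ℝ) (p : ℝ × ℝ) : ℝ :=
  s / (2 * Real.pi * (s^2 + p.1^2 + p.2^2) ^ ((3:ℝ)/2))

open ENNReal Module

noncomputable def F2 (p : ℝ × ℝ) : ℝ := ((1 + p.1^2 + p.2^2)^2)⁻¹

noncomputable def K0 : ℝ := ∫ p : ℝ × ℝ, F2 p

noncomputable def gam (s : ℝ) (p : ℝ × ℝ) : ℝ :=
  3 * s / (2 * Real.pi) * ((s^2 + p.1^2 + p.2^2)^2)⁻¹

lemma F2_cont : Continuous F2 := by
  apply Continuous.inv₀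
  · fun_prop
  · intro p; positivity

lemma gam_cont (s : ℝ) (hs : 0 < s) : Continuous (gam s) := by
  apply Continuous.mul continuous_const
  apply Continuous.inv₀
  · fun_prop
  · intro p; positivity

lemma gam_nonneg (s : ℝ) (hs : 0 < s) (p : ℝ × ℝ) : 0 ≤ gam s p := by
  unfold gam
  have := Real.pi_pos
  positivity

lemma poisson_cont (s : ℝ) (hs : 0 < s) : Continuous (poissonKer s) := by
  apply Continuous.div continuous_const
  · exact continuous_const.mul
      ((by fun_prop : Continuous fun p : ℝ × ℝ => s^2 + p.1^2 + p.2^2).rpow_const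
      (fun p => Or.inr (by norm_num)))
  · intro p
    have h : (0:ℝ) < s^2 + p.1^2 + p.2^2 := by positivity
    have h2 := Real.rpow_pos_of_pos h ((3:ℝ)/2)
    have := Real.pi_pos
    positivity

lemma poisson_nonneg (s : ℝ) (hs : 0 < s) (q : ℝ × ℝ) : 0 ≤ poissonKer s q := by
  unfold poissonKer
  have h : (0:ℝ) < s^2 + q.1^2 + q.2^2 := by positivity
  have h2 := Real.rpow_pos_of_pos h ((3:ℝ)/2)
  have := Real.pi_pos
  positivity

lemma poisson_le (s : ℝ) (hs : 0 < s) (q : ℝ × ℝ) :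
    poissonKer s q ≤ 1 / (2 * Real.pi * s^2) := by
  have hpi := Real.pi_pos
  have h : (0:ℝ) < s^2 + q.1^2 + q.2^2 := by positivity
  have hcube : ((s^2:ℝ)) ^ ((3:ℝ)/2) = s^3 := by
    rw [← Real.rpow_natCast s 2, ← Real.rpow_mul hs.le, ← Real.rpow_natCast s 3]
    norm_num
  have hmono : ((s^2:ℝ)) ^ ((3:ℝ)/2) ≤ (s^2 + q.1^2 + q.2^2) ^ ((3:ℝ)/2) :=
    Real.rpow_le_rpow (by positivity) (by nlinarith [sq_nonneg q.1, sq_nonneg q.2]) (by norm_num)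
  have hs3 : (0:ℝ) < s^3 := by positivity
  calc poissonKer s q = s / (2 * Real.pi * (s^2 + q.1^2 + q.2^2) ^ ((3:ℝ)/2)) := rfl
    _ ≤ s / (2 * Real.pi * s^3) := by
        apply div_le_div_of_nonneg_left hs.le (by positivity)
        calc 2 * Real.pi * s^3 = 2 * Real.pi * (s^2)^((3:ℝ)/2) := by rw [hcube]
          _ ≤ 2 * Real.pi * (s^2 + q.1^2 + q.2^2) ^ ((3:ℝ)/2) := by
              apply mul_le_mul_of_nonneg_left hmono (by positivity)
    _ = 1 / (2 * Real.pi * s^2) := by field_simp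

lemma norm_sq_le (p : ℝ × ℝ) : ‖p‖^2 ≤ p.1^2 + p.2^2 := by
  have h : ‖p‖ = max |p.1| |p.2| := by
    rw [Prod.norm_def, Real.norm_eq_abs, Real.norm_eq_abs]
  rcases max_cases |p.1| |p.2| with ⟨h1, _⟩ | ⟨h1, _⟩ <;> rw [h, h1, sq_abs] <;>
    nlinarith [sq_nonneg p.1, sq_nonneg p.2]

lemma F2_integrable : Integrable F2 := by
  have hint : Integrable (fun p : ℝ × ℝ => (4:ℝ) * ((1:ℝ) + ‖p‖) ^ (-(4:ℝ))) :=
    (integrable_one_add_norm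
      (by simp [Module.finrank_prod]; norm_num : (finrank ℝ (ℝ × ℝ) : ℝ) < 4)).const_mul 4
  refine hint.mono' F2_cont.aestronglyMeasurable (ae_of_all _ fun p => ?_)
  have hpos : (0:ℝ) < 1 + ‖p‖ := by positivity
  have hr : ((1:ℝ) + ‖p‖) ^ (-(4:ℝ)) = (((1:ℝ) + ‖p‖)^(4:ℕ))⁻¹ := by
    rw [← Real.rpow_natCast (1 + ‖p‖) 4, ← Real.rpow_neg hpos.le]; norm_num
  have hA : (0:ℝ) < (1 + p.1^2 + p.2^2)^2 := by positivity
  have hB : (0:ℝ) < ((1:ℝ) + ‖p‖)^(4:ℕ) := by positivity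
  have h1 : ((1:ℝ) + ‖p‖)^(4:ℕ) ≤ 4 * (1 + p.1^2 + p.2^2)^2 := by
    nlinarith [norm_sq_le p, norm_nonneg p, sq_nonneg (1 - ‖p‖), sq_nonneg (‖p‖^2 - 1)]
  have h2 : ((1 + p.1^2 + p.2^2)^2)⁻¹ ≤ 4 * (((1:ℝ) + ‖p‖)^(4:ℕ))⁻¹ := by
    rw [inv_eq_one_div, inv_eq_one_div, mul_one_div, div_le_div_iff₀ hA hB]
    linarith
  calc ‖F2 p‖ = ((1 + p.1^2 + p.2^2)^2)⁻¹ := by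
        simp only [Real.norm_eq_abs, F2]; exact abs_of_nonneg (by positivity)
    _ ≤ 4 * (((1:ℝ) + ‖p‖)^(4:ℕ))⁻¹ := h2
    _ = 4 * ((1:ℝ) + ‖p‖) ^ (-(4:ℝ)) := by rw [hr]

lemma K0_nonneg : 0 ≤ K0 :=
  integral_nonneg fun p => by unfold F2; positivity

lemma gam_integrable (s : ℝ) (hs : 0 < s) : Integrable (gam s) := by
  set m : ℝ := min (s^2) 1 with hm
  have hm0 : 0 < m := lt_min (by positivity) one_pos
  have hint : Integrable (fun p : ℝ × ℝ => (3 * s / (2 * Real.pi) * (m^2)⁻¹) * F2 p) :=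
    F2_integrable.const_mul _
  refine hint.mono' (gam_cont s hs).aestronglyMeasurable (ae_of_all _ fun p => ?_)
  have hpi := Real.pi_pos
  have hA : (0:ℝ) < 1 + p.1^2 + p.2^2 := by positivity
  have hkey : m * (1 + p.1^2 + p.2^2) ≤ s^2 + p.1^2 + p.2^2 := by
    have h1 : m ≤ s^2 := min_le_left _ _
    have h2 : m ≤ 1 := min_le_right _ _
    nlinarith [sq_nonneg p.1, sq_nonneg p.2]
  have h3 : (m * (1 + p.1^2 + p.2^2))^2 ≤ (s^2 + p.1^2 + p.2^2)^2 := by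
    apply pow_le_pow_left₀ (by positivity) hkey 2
  have h4 : ((s^2 + p.1^2 + p.2^2)^2)⁻¹ ≤ ((m * (1 + p.1^2 + p.2^2))^2)⁻¹ :=
    inv_anti₀ (by positivity) h3
  calc ‖gam s p‖ = gam s p := by
        rw [Real.norm_eq_abs]; exact abs_of_nonneg (gam_nonneg s hs p)
    _ = 3 * s / (2 * Real.pi) * ((s^2 + p.1^2 + p.2^2)^2)⁻¹ := rfl
    _ ≤ 3 * s / (2 * Real.pi) * ((m * (1 + p.1^2 + p.2^2))^2)⁻¹ :=
        mul_le_mul_of_nonneg_left h4 (by positivity)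
    _ = 3 * s / (2 * Real.pi) * (m^2)⁻¹ * F2 p := by
        unfold F2; rw [mul_pow, mul_inv]; ring

lemma integral_gam (s : ℝ) (hs : 0 < s) :
    ∫ p : ℝ × ℝ, gam s p = 3 / (2 * Real.pi) * K0 / s := by
  have hpi := Real.pi_pos
  have hs0 : s ≠ 0 := hs.ne'
  have h1 : ∀ p : ℝ × ℝ, gam s p = (3 * s / (2 * Real.pi) * (s^4)⁻¹) * F2 (s⁻¹ • p) := by
    intro p
    unfold gam F2
    simp only [Prod.smul_fst, Prod.smul_snd, smul_eq_mul]
    field_simp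
  calc ∫ p : ℝ × ℝ, gam s p
      = ∫ p : ℝ × ℝ, (3 * s / (2 * Real.pi) * (s^4)⁻¹) * F2 (s⁻¹ • p) := by
        exact integral_congr_ae (ae_of_all _ h1)
    _ = (3 * s / (2 * Real.pi) * (s^4)⁻¹) * ∫ p : ℝ × ℝ, F2 (s⁻¹ • p) :=
        integral_const_mul _ _
    _ = (3 * s / (2 * Real.pi) * (s^4)⁻¹) * (s^2 * K0) := by
        rw [Measure.integral_comp_smul volume F2 s⁻¹]
        rw [show finrank ℝ (ℝ × ℝ) = 2 by simp [Module.finrank_prod]]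
        rw [smul_eq_mul]
        unfold K0
        congr 1
        rw [inv_pow, inv_inv, abs_of_nonneg (by positivity)]
    _ = 3 / (2 * Real.pi) * K0 / s := by field_simp

lemma hasDeriv_aux (s : ℝ) (hs : 0 < s) (p b : ℝ × ℝ) (τ : ℝ) :
    HasDerivAt (fun τ : ℝ => poissonKer s (p + τ • b))
      ((s / (2 * Real.pi)) * ((-(3:ℝ)/2) *
        (s^2 + (p.1 + τ*b.1)^2 + (p.2 + τ*b.2)^2) ^ (-(3:ℝ)/2 - 1) *
        (2*(p.1 + τ*b.1)*b.1 + 2*(p.2 + τ*b.2)*b.2))) τ := by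
  have hpi := Real.pi_pos
  have hx : HasDerivAt (fun τ : ℝ => p.1 + τ * b.1) b.1 τ := by
    simpa using ((hasDerivAt_id τ).mul_const b.1).const_add p.1
  have hy : HasDerivAt (fun τ : ℝ => p.2 + τ * b.2) b.2 τ := by
    simpa using ((hasDerivAt_id τ).mul_const b.2).const_add p.2
  have hQ : HasDerivAt (fun τ : ℝ => s^2 + (p.1 + τ*b.1)^2 + (p.2 + τ*b.2)^2)
      (2*(p.1 + τ*b.1)*b.1 + 2*(p.2 + τ*b.2)*b.2) τ := by
    have h1 := hx.pow 2
    have h2 := hy.pow 2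
    have h3 := (h1.const_add (s^2)).add h2
    exact h3.congr_deriv (by norm_num)
  have hQpos : (0:ℝ) < s^2 + (p.1 + τ*b.1)^2 + (p.2 + τ*b.2)^2 := by positivity
  have h3 := hQ.rpow_const (p := -(3:ℝ)/2) (Or.inl hQpos.ne')
  have h4 := h3.const_mul (s / (2 * Real.pi))
  have hfun : (fun τ : ℝ => poissonKer s (p + τ • b)) =
      fun τ : ℝ => (s / (2 * Real.pi)) *
        (s^2 + (p.1 + τ*b.1)^2 + (p.2 + τ*b.2)^2) ^ (-(3:ℝ)/2) := by
    funext σ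
    have hQpos' : (0:ℝ) < s^2 + (p.1 + σ*b.1)^2 + (p.2 + σ*b.2)^2 := by positivity
    unfold poissonKer
    simp only [Prod.fst_add, Prod.snd_add, Prod.smul_fst, Prod.smul_snd, smul_eq_mul]
    rw [show (-(3:ℝ)/2) = -((3:ℝ)/2) by ring, Real.rpow_neg hQpos'.le]
    have h5 : (0:ℝ) < (s^2 + (p.1 + σ*b.1)^2 + (p.2 + σ*b.2)^2) ^ ((3:ℝ)/2) :=
      Real.rpow_pos_of_pos hQpos' _
    field_simp
  rw [hfun]
  exact h4.congr_deriv (by ring)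

lemma D_le (s : ℝ) (hs : 0 < s) (p b : ℝ × ℝ) (τ : ℝ) :
    |(s / (2 * Real.pi)) * ((-(3:ℝ)/2) *
        (s^2 + (p.1 + τ*b.1)^2 + (p.2 + τ*b.2)^2) ^ (-(3:ℝ)/2 - 1) *
        (2*(p.1 + τ*b.1)*b.1 + 2*(p.2 + τ*b.2)*b.2))|
      ≤ (|b.1| + |b.2|) * gam s (p + τ • b) := by
  have hpi := Real.pi_pos
  set x' := p.1 + τ*b.1 with hx'def
  set y' := p.2 + τ*b.2 with hy'def
  set A := s^2 + x'^2 + y'^2 with hAdef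
  have hA : (0:ℝ) < A := by positivity
  have hApow : (0:ℝ) < A ^ (-(3:ℝ)/2 - 1) := Real.rpow_pos_of_pos hA _
  have hx' : |x'| ≤ Real.sqrt A := Real.abs_le_sqrt (by nlinarith [sq_nonneg s, sq_nonneg y'])
  have hy' : |y'| ≤ Real.sqrt A := Real.abs_le_sqrt (by nlinarith [sq_nonneg s, sq_nonneg x'])
  have hsqA : (0:ℝ) ≤ Real.sqrt A := Real.sqrt_nonneg A
  have hW : |2*x'*b.1 + 2*y'*b.2| ≤ 2 * Real.sqrt A * (|b.1| + |b.2|) := by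
    calc |2*x'*b.1 + 2*y'*b.2| ≤ |2*x'*b.1| + |2*y'*b.2| := abs_add_le _ _
      _ = 2 * |x'| * |b.1| + 2 * |y'| * |b.2| := by
          rw [abs_mul, abs_mul, abs_mul, abs_mul, abs_two]
      _ ≤ 2 * Real.sqrt A * |b.1| + 2 * Real.sqrt A * |b.2| := by
          nlinarith [abs_nonneg b.1, abs_nonneg b.2, hx', hy']
      _ = 2 * Real.sqrt A * (|b.1| + |b.2|) := by ring
  have hkey : A ^ (-(3:ℝ)/2 - 1) * Real.sqrt A = (A^2)⁻¹ := by
    rw [Real.sqrt_eq_rpow, ← Real.rpow_add hA,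
      show (-(3:ℝ)/2 - 1 + 1/2) = -((2:ℕ):ℝ) by norm_num,
      Real.rpow_neg hA.le, Real.rpow_natCast]
  have habs : |(s / (2 * Real.pi)) * ((-(3:ℝ)/2) * A ^ (-(3:ℝ)/2 - 1) *
      (2*x'*b.1 + 2*y'*b.2))|
      = (s / (2 * Real.pi)) * ((3:ℝ)/2 * A ^ (-(3:ℝ)/2 - 1) * |2*x'*b.1 + 2*y'*b.2|) := by
    rw [abs_mul, abs_mul, abs_mul]
    rw [abs_of_nonneg (by positivity : (0:ℝ) ≤ s / (2*Real.pi)),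
      abs_of_nonneg hApow.le, show |(-(3:ℝ)/2)| = (3:ℝ)/2 by rw [abs_of_nonpos] <;> norm_num]
  rw [habs]
  have hgam : gam s (p + τ • b) = 3 * s / (2 * Real.pi) * (A^2)⁻¹ := by
    unfold gam
    simp only [Prod.fst_add, Prod.snd_add, Prod.smul_fst, Prod.smul_snd, smul_eq_mul,
      hAdef, hx'def, hy'def]
  calc (s / (2 * Real.pi)) * ((3:ℝ)/2 * A ^ (-(3:ℝ)/2 - 1) * |2*x'*b.1 + 2*y'*b.2|)
      ≤ (s / (2 * Real.pi)) * ((3:ℝ)/2 * A ^ (-(3:ℝ)/2 - 1) *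
          (2 * Real.sqrt A * (|b.1| + |b.2|))) := by
        apply mul_le_mul_of_nonneg_left _ (by positivity)
        exact mul_le_mul_of_nonneg_left hW (by positivity)
    _ = (s / (2 * Real.pi)) * (3 * (A ^ (-(3:ℝ)/2 - 1) * Real.sqrt A) * (|b.1| + |b.2|)) := by
        ring
    _ = (|b.1| + |b.2|) * (3 * s / (2 * Real.pi) * (A^2)⁻¹) := by
        rw [hkey]; ring
    _ = (|b.1| + |b.2|) * gam s (p + τ • b) := by rw [hgam]

lemma trans_pt (s : ℝ) (hs : 0 < s) (p b : ℝ × ℝ) :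
    |poissonKer s (p + b) - poissonKer s p|
      ≤ (|b.1| + |b.2|) * ∫ τ in Set.Ioc (0:ℝ) 1, gam s (p + τ • b) := by
  have hpi := Real.pi_pos
  set D : ℝ → ℝ := fun τ => (s / (2 * Real.pi)) * ((-(3:ℝ)/2) *
        (s^2 + (p.1 + τ*b.1)^2 + (p.2 + τ*b.2)^2) ^ (-(3:ℝ)/2 - 1) *
        (2*(p.1 + τ*b.1)*b.1 + 2*(p.2 + τ*b.2)*b.2)) with hD
  have hQc : Continuous fun τ : ℝ => s^2 + (p.1 + τ*b.1)^2 + (p.2 + τ*b.2)^2 := by fun_prop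
  have hDc : Continuous D := by
    apply continuous_const.mul
    apply Continuous.mul
    · exact continuous_const.mul (hQc.rpow_const fun τ => Or.inl (by positivity))
    · fun_prop
  have hgc : Continuous fun τ : ℝ => gam s (p + τ • b) :=
    (gam_cont s hs).comp (continuous_const.add (continuous_id.smul continuous_const))
  have hftc := intervalIntegral.integral_eq_sub_of_hasDerivAt
    (f := fun τ : ℝ => poissonKer s (p + τ • b)) (f' := D)
    (fun τ _ => hasDeriv_aux s hs p b τ) (hDc.intervalIntegrable 0 1)
  have h0 : p + (0:ℝ) • b = p := by simp
  have h1 : p + (1:ℝ) • b = p + b := by simp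
  calc |poissonKer s (p + b) - poissonKer s p|
      = |∫ τ in (0:ℝ)..1, D τ| := by rw [hftc]; simp only [h0, h1]
    _ ≤ ∫ τ in (0:ℝ)..1, |D τ| := intervalIntegral.abs_integral_le_integral_abs zero_le_one
    _ ≤ ∫ τ in (0:ℝ)..1, (|b.1| + |b.2|) * gam s (p + τ • b) := by
        apply intervalIntegral.integral_mono_on zero_le_one
          (hDc.abs.intervalIntegrable 0 1)
          ((continuous_const.mul hgc).intervalIntegrable 0 1)
          (fun τ _ => D_le s hs p b τ)
    _ = (|b.1| + |b.2|) * ∫ τ in (0:ℝ)..1, gam s (p + τ • b) := by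
        rw [intervalIntegral.integral_const_mul]
    _ = (|b.1| + |b.2|) * ∫ τ in Set.Ioc (0:ℝ) 1, gam s (p + τ • b) := by
        rw [intervalIntegral.integral_of_le zero_le_one]

open ENNReal in
lemma trans_L1 (s : ℝ) (hs : 0 < s) (b : ℝ × ℝ) :
    ∫⁻ p : ℝ × ℝ, ENNReal.ofReal |poissonKer s (p + b) - poissonKer s p|
      ≤ ENNReal.ofReal ((|b.1| + |b.2|) * (3 / (2 * Real.pi) * K0 / s)) := by
  have hpi := Real.pi_pos
  have hgc : ∀ τ : ℝ, Continuous fun p : ℝ × ℝ => gam s (p + τ • b) :=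
    fun τ => (gam_cont s hs).comp (continuous_id.add continuous_const)
  have hIcont : ∀ p : ℝ × ℝ, IntegrableOn (fun τ : ℝ => gam s (p + τ • b)) (Set.Ioc 0 1) := by
    intro p
    exact Continuous.integrableOn_Ioc
      ((gam_cont s hs).comp (continuous_const.add (continuous_id.smul continuous_const)))
  have hjoint : Measurable fun z : (ℝ × ℝ) × ℝ => ENNReal.ofReal (gam s (z.1 + z.2 • b)) := by
    apply Measurable.ennreal_ofReal
    exact ((gam_cont s hs).comp (continuous_fst.add (continuous_snd.smul continuous_const))).measurable
  calc ∫⁻ p : ℝ × ℝ, ENNReal.ofReal |poissonKer s (p + b) - poissonKer s p|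
      ≤ ∫⁻ p : ℝ × ℝ, ENNReal.ofReal
          ((|b.1| + |b.2|) * ∫ τ in Set.Ioc (0:ℝ) 1, gam s (p + τ • b)) :=
        lintegral_mono fun p => ENNReal.ofReal_le_ofReal (trans_pt s hs p b)
    _ = ∫⁻ p : ℝ × ℝ, ENNReal.ofReal (|b.1| + |b.2|) *
          ∫⁻ τ in Set.Ioc (0:ℝ) 1, ENNReal.ofReal (gam s (p + τ • b)) := by
        apply lintegral_congr fun p => ?_
        rw [ENNReal.ofReal_mul (by positivity)]
        congr 1
        exact ofReal_integral_eq_lintegral_ofReal (hIcont p)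
          (ae_of_all _ fun τ => gam_nonneg s hs _)
    _ = ENNReal.ofReal (|b.1| + |b.2|) *
          ∫⁻ p : ℝ × ℝ, ∫⁻ τ in Set.Ioc (0:ℝ) 1, ENNReal.ofReal (gam s (p + τ • b)) :=
        lintegral_const_mul' _ _ ofReal_ne_top
    _ = ENNReal.ofReal (|b.1| + |b.2|) *
          ∫⁻ τ in Set.Ioc (0:ℝ) 1, ∫⁻ p : ℝ × ℝ, ENNReal.ofReal (gam s (p + τ • b)) := by
        rw [lintegral_lintegral_swap hjoint.aemeasurable]
    _ = ENNReal.ofReal (|b.1| + |b.2|) *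
          ∫⁻ τ in Set.Ioc (0:ℝ) 1, ∫⁻ p : ℝ × ℝ, ENNReal.ofReal (gam s p) := by
        congr 1
        apply lintegral_congr fun τ => ?_
        exact lintegral_add_right_eq_self (fun p => ENNReal.ofReal (gam s p)) (τ • b)
    _ = ENNReal.ofReal (|b.1| + |b.2|) * ∫⁻ p : ℝ × ℝ, ENNReal.ofReal (gam s p) := by
        rw [setLIntegral_const, Real.volume_Ioc]
        norm_num
    _ = ENNReal.ofReal (|b.1| + |b.2|) * ENNReal.ofReal (3 / (2 * Real.pi) * K0 / s) := by
        rw [← ofReal_integral_eq_lintegral_ofReal (gam_integrable s hs)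
          (ae_of_all _ fun p => gam_nonneg s hs p), integral_gam s hs]
    _ = ENNReal.ofReal ((|b.1| + |b.2|) * (3 / (2 * Real.pi) * K0 / s)) := by
        rw [← ENNReal.ofReal_mul (by positivity)]

theorem stmt12 (β η θ : ℝ) (hβ : 1 < β) (hη : 0 < η) (hηθ : η < θ)
    (ψ : ℝ → ℝ) (hψsm : ContDiff ℝ (⊤ : ℕ∞) ψ) (hψ0 : ∀ u, 0 ≤ ψ u)
    (hψsupp : Function.support ψ ⊆ Set.Icc η θ) (hψ1 : ∫ u, ψ u = 1) :
    ∃ C > 0, ∀ s t : ℝ, 0 < t → t ≤ s →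
      (∫ p : ℝ × ℝ,
        |(1/t) * (∫ u, poissonKer s (p.1 + u, p.2 + u ^ β / t ^ (β-1)) * ψ (u/t))
          - poissonKer s p|) ≤ C * (t / s) := by
  have hpi := Real.pi_pos
  have hK0 := K0_nonneg
  have hθ : 0 < θ := hη.trans hηθ
  have hθβ : 0 < θ ^ β := Real.rpow_pos_of_pos hθ β
  set Cc : ℝ := (θ + θ ^ β) * (3 / (2 * Real.pi) * K0) with hCc
  have hCc0 : 0 ≤ Cc := by
    apply mul_nonneg (by positivity)
    apply mul_nonneg (by positivity) hK0
  refine ⟨Cc + 1, by positivity, ?_⟩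
  intro s t ht hts
  have hs : 0 < s := lt_of_lt_of_le ht hts
  set w : ℝ → ℝ := fun u => (1/t) * ψ (u/t) with hw
  set bb : ℝ → ℝ × ℝ := fun u => (u, u ^ β / t ^ (β-1)) with hbb
  have hψc : Continuous ψ := hψsm.continuous
  have hψcs : HasCompactSupport ψ := HasCompactSupport.intro isCompact_Icc
    (fun x hx => by
      by_contra h
      exact hx (hψsupp (Function.mem_support.2 h)))
  have hwcont : Continuous w := continuous_const.mul (hψc.comp (continuous_id.div_const t))
  have hwcs : HasCompactSupport fun u : ℝ => ψ (u/t) := by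
    simpa [div_eq_mul_inv, Function.comp_def] using
      hψcs.comp_homeomorph (Homeomorph.mulRight₀ t⁻¹ (inv_ne_zero ht.ne'))
  have hw_int : Integrable w :=
    ((hψc.comp (continuous_id.div_const t)).integrable_of_hasCompactSupport hwcs).const_mul _
  have hw0 : ∀ u, 0 ≤ w u := fun u => mul_nonneg (by positivity) (hψ0 _)
  have hw1 : ∫ u, w u = 1 := by
    calc ∫ u, w u = (1/t) * ∫ u, ψ (u/t) := integral_const_mul _ _
      _ = (1/t) * (|t| • ∫ u, ψ u) := by rw [Measure.integral_comp_div ψ t]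
      _ = 1 := by rw [hψ1, abs_of_pos ht, smul_eq_mul]; field_simp
  have hb_meas : Measurable bb :=
    measurable_id.prodMk ((measurable_id.pow measurable_const).div_const _)
  have hκ : (0:ℝ) ≤ 3 / (2 * Real.pi) * K0 / s :=
    div_nonneg (mul_nonneg (by positivity) hK0) hs.le
  have hsupp : ∀ u : ℝ, ψ (u/t) ≠ 0 → |(bb u).1| + |(bb u).2| ≤ (θ + θ ^ β) * t := by
    intro u hu
    obtain ⟨hl, hr⟩ := hψsupp (Function.mem_support.2 hu)
    have hul : η * t ≤ u := (le_div_iff₀ ht).1 hl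
    have hur : u ≤ θ * t := (div_le_iff₀ ht).1 hr
    have hu0 : 0 < u := lt_of_lt_of_le (by positivity) hul
    have htβ : 0 < t ^ (β - 1) := Real.rpow_pos_of_pos ht _
    have h1 : |(bb u).1| ≤ θ * t := by
      simp only [hbb]; rw [abs_of_pos hu0]; exact hur
    have hub : u ^ β ≤ (θ * t) ^ β := Real.rpow_le_rpow hu0.le hur (by linarith)
    have hθt : (θ * t) ^ β = θ ^ β * t ^ β := Real.mul_rpow hθ.le ht.le
    have htt : t ^ β / t ^ (β - 1) = t := by
      rw [← Real.rpow_sub ht, show β - (β-1) = 1 by ring, Real.rpow_one]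
    have h2 : |(bb u).2| ≤ θ ^ β * t := by
      simp only [hbb]
      rw [abs_of_pos (div_pos (Real.rpow_pos_of_pos hu0 β) htβ)]
      calc u ^ β / t ^ (β-1) ≤ (θ * t) ^ β / t ^ (β-1) := by gcongr
        _ = θ ^ β * (t ^ β / t ^ (β-1)) := by rw [hθt]; ring
        _ = θ ^ β * t := by rw [htt]
    calc |(bb u).1| + |(bb u).2| ≤ θ * t + θ ^ β * t := add_le_add h1 h2
      _ = (θ + θ ^ β) * t := by ring
  have hPcont := poisson_cont s hs
  have hA : ∀ p : ℝ × ℝ,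
      (1/t) * (∫ u, poissonKer s (p.1 + u, p.2 + u ^ β / t ^ (β-1)) * ψ (u/t))
        - poissonKer s p
      = ∫ u, (poissonKer s (p + bb u) - poissonKer s p) * w u := by
    intro p
    have harg : ∀ u : ℝ, (p.1 + u, p.2 + u ^ β / t ^ (β-1)) = p + bb u := by
      intro u; simp [hbb, Prod.ext_iff]
    have hint1 : Integrable fun u => poissonKer s (p + bb u) * w u := by
      apply Integrable.mono' (hw_int.const_mul (1/(2*Real.pi*s^2)))
      · exact ((hPcont.measurable.comp (hb_meas.const_add p)).mul
          hwcont.measurable).aestronglyMeasurable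
      · apply ae_of_all
        intro u
        rw [Real.norm_eq_abs, abs_mul, abs_of_nonneg (poisson_nonneg s hs _),
          abs_of_nonneg (hw0 u)]
        exact mul_le_mul_of_nonneg_right (poisson_le s hs _) (hw0 u)
    have hint2 : Integrable fun u => poissonKer s p * w u := hw_int.const_mul _
    have e1 : (1/t) * (∫ u, poissonKer s (p.1 + u, p.2 + u ^ β / t ^ (β-1)) * ψ (u/t))
        = ∫ u, poissonKer s (p + bb u) * w u := by
      rw [← integral_const_mul]
      apply integral_congr_ae (ae_of_all _ fun u => ?_)
      rw [harg u]; simp only [hw]; ring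
    rw [e1]
    have e2 : poissonKer s p = ∫ u, poissonKer s p * w u := by
      rw [integral_const_mul, hw1, mul_one]
    calc (∫ u, poissonKer s (p + bb u) * w u) - poissonKer s p
        = (∫ u, poissonKer s (p + bb u) * w u) - ∫ u, poissonKer s p * w u := by
          rw [← e2]
      _ = ∫ u, (poissonKer s (p + bb u) * w u - poissonKer s p * w u) :=
          (integral_sub hint1 hint2).symm
      _ = ∫ u, (poissonKer s (p + bb u) - poissonKer s p) * w u := by
          apply integral_congr_ae (ae_of_all _ fun u => ?_); ring
  have hgmeas : Measurable fun z : (ℝ × ℝ) × ℝ =>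
      (poissonKer s (z.1 + bb z.2) - poissonKer s z.1) * w z.2 :=
    (((hPcont.measurable.comp (measurable_fst.add (hb_meas.comp measurable_snd))).sub
      (hPcont.measurable.comp measurable_fst)).mul (hwcont.measurable.comp measurable_snd))
  have hAsm : StronglyMeasurable fun p : ℝ × ℝ =>
      ∫ u, (poissonKer s (p + bb u) - poissonKer s p) * w u :=
    hgmeas.stronglyMeasurable.integral_prod_right'
  set M : ℝ := (θ + θ ^ β) * t * (3 / (2 * Real.pi) * K0 / s) with hM
  have hM0 : 0 ≤ M := mul_nonneg (by positivity) hκ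
  have hL : ∫⁻ p : ℝ × ℝ,
      ENNReal.ofReal |∫ u, (poissonKer s (p + bb u) - poissonKer s p) * w u|
      ≤ ENNReal.ofReal M := by
    calc ∫⁻ p : ℝ × ℝ,
        ENNReal.ofReal |∫ u, (poissonKer s (p + bb u) - poissonKer s p) * w u|
        ≤ ∫⁻ p : ℝ × ℝ, ∫⁻ u : ℝ,
            ENNReal.ofReal |(poissonKer s (p + bb u) - poissonKer s p) * w u| := by
          apply lintegral_mono fun p => ?_
          rw [← Real.enorm_eq_ofReal_abs]
          refine le_trans (enorm_integral_le_lintegral_enorm _) ?_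
          apply lintegral_mono fun u => ?_
          rw [Real.enorm_eq_ofReal_abs]
      _ = ∫⁻ u : ℝ, ∫⁻ p : ℝ × ℝ,
            ENNReal.ofReal |(poissonKer s (p + bb u) - poissonKer s p) * w u| :=
          lintegral_lintegral_swap (hgmeas.abs.ennreal_ofReal.aemeasurable)
      _ ≤ ∫⁻ u : ℝ, ENNReal.ofReal ((θ + θ ^ β) * t * (3 / (2 * Real.pi) * K0 / s)) *
            ENNReal.ofReal (w u) := by
          apply lintegral_mono fun u => ?_
          have e3 : ∀ p : ℝ × ℝ,
              ENNReal.ofReal |(poissonKer s (p + bb u) - poissonKer s p) * w u|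
              = ENNReal.ofReal |poissonKer s (p + bb u) - poissonKer s p|
                  * ENNReal.ofReal (w u) := by
            intro p
            rw [abs_mul, abs_of_nonneg (hw0 u), ENNReal.ofReal_mul (abs_nonneg _)]
          simp only [e3]
          rw [lintegral_mul_const' _ _ ofReal_ne_top]
          by_cases hu : ψ (u/t) = 0
          · have : w u = 0 := by simp [hw, hu]
            simp [this]
          · apply mul_le_mul_left
            refine le_trans (trans_L1 s hs (bb u)) (ENNReal.ofReal_le_ofReal ?_)
            exact mul_le_mul_of_nonneg_right (hsupp u hu) hκ
      _ = ENNReal.ofReal ((θ + θ ^ β) * t * (3 / (2 * Real.pi) * K0 / s)) *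
            ∫⁻ u : ℝ, ENNReal.ofReal (w u) := lintegral_const_mul' _ _ ofReal_ne_top
      _ = ENNReal.ofReal M := by
          rw [← ofReal_integral_eq_lintegral_ofReal hw_int (ae_of_all _ hw0), hw1]
          simp [hM]
  have hrw : (∫ p : ℝ × ℝ,
      |(1/t) * (∫ u, poissonKer s (p.1 + u, p.2 + u ^ β / t ^ (β-1)) * ψ (u/t))
        - poissonKer s p|)
      = ∫ p : ℝ × ℝ, |∫ u, (poissonKer s (p + bb u) - poissonKer s p) * w u| :=
    integral_congr_ae (ae_of_all _ fun p => by beta_reduce; rw [hA p])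
  rw [hrw]
  rw [integral_eq_lintegral_of_nonneg_ae (ae_of_all _ fun p => abs_nonneg _)
    (hAsm.measurable.abs.aestronglyMeasurable)]
  have hMC : M ≤ (Cc + 1) * (t/s) := by
    have hMeq : M = Cc * (t/s) := by rw [hM, hCc]; field_simp
    rw [hMeq]
    apply mul_le_mul_of_nonneg_right (by linarith) (by positivity)
  calc (∫⁻ p : ℝ × ℝ,
        ENNReal.ofReal |∫ u, (poissonKer s (p + bb u) - poissonKer s p) * w u|).toReal
      ≤ (ENNReal.ofReal M).toReal := ENNReal.toReal_mono ofReal_ne_top hL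
    _ = M := ENNReal.toReal_ofReal hM0
    _ ≤ (Cc + 1) * (t/s) := hMC
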